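/- arXiv:2002.09932 — 3 statements merged into one kernel-verified Lean document; each statement's English description precedes it below -/
import Mathlib

section
/- Let δ be an increasing range map (δ(i) < δ(i+1) for all i ≥ 1) and n ≥ 0. There is a unique map f : Ca_δ(n) → Hi_δ(n) such that e_{Hi_δ}(f(u)) = e_{Ca_δ}(u) for every u ∈ Ca_δ(n); this map f = e_{Hi_δ}^{-1} ∘ e_{Ca_δ} is a bijection from Ca_δ(n) to Hi_δ(n) and a poset morphism: u ≼ v implies f(u) ≼ f(v). In particular Hi_δ(n) is an order extension of Ca_δ(n). -/
/-- Componentwise order on words of natural numbers of the same length. -/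
def wle (u v : List ℕ) : Prop := List.Forall₂ (· ≤ ·) u v

/-- Strict componentwise order. -/
def wlt (u v : List ℕ) : Prop := wle u v ∧ u ≠ v

/-- `u` is a `δ`-cliff: the letter at (0-indexed) position `i` is at most `δ i`.
(The range map is 0-indexed: `δ i` is the bound of the `(i+1)`-st letter.) -/
def IsCliff (δ : ℕ → ℕ) (u : List ℕ) : Prop := ∀ i < u.length, u.getD i 0 ≤ δ i

def ClosedByPrefix (S : Set (List ℕ)) : Prop := ∀ u v : List ℕ, u ++ v ∈ S → u ∈ S

def MinExtendable (S : Set (List ℕ)) : Prop := [] ∈ S ∧ ∀ u ∈ S, u ++ [0] ∈ S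

def MaxExtendable (δ : ℕ → ℕ) (S : Set (List ℕ)) : Prop :=
  [] ∈ S ∧ ∀ u ∈ S, u ++ [δ u.length] ∈ S

/-- `v` covers `u` in the subposet `S` (componentwise order on words of equal length). -/
def CoversIn (S : Set (List ℕ)) (u v : List ℕ) : Prop :=
  u ∈ S ∧ v ∈ S ∧ wlt u v ∧ ¬ ∃ w ∈ S, wlt u w ∧ wlt w v

/-- Auxiliary for the decrementation map: input is the reversed word. -/
noncomputable def decrAux (S : Set (List ℕ)) : List ℕ → List ℕ
  | [] => []
  | a :: r => decrAux S r ++ [sSup {b | b ≤ a ∧ decrAux S r ++ [b] ∈ S}]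

/-- The `S`-decrementation map. -/
noncomputable def decr (S : Set (List ℕ)) (u : List ℕ) : List ℕ := decrAux S u.reverse

/-- Auxiliary for the incrementation map: input is the reversed word. -/
noncomputable def incrAux (δ : ℕ → ℕ) (S : Set (List ℕ)) : List ℕ → List ℕ
  | [] => []
  | a :: r => incrAux δ S r ++
      [sInf {b | a ≤ b ∧ b ≤ δ r.length ∧ incrAux δ S r ++ [b] ∈ S}]

/-- The `S`-incrementation map. -/
noncomputable def incr (δ : ℕ → ℕ) (S : Set (List ℕ)) (u : List ℕ) : List ℕ :=
  incrAux δ S u.reverse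

/-- The `S`-elevation map. -/
noncomputable def elev (S : Set (List ℕ)) (u : List ℕ) : List ℕ :=
  (List.range u.length).map fun i =>
    Set.ncard {a : ℕ | a < u.getD i 0 ∧ u.take i ++ [a] ∈ S}

/-- A `δ`-hill: a weakly increasing `δ`-cliff. -/
def IsHill (δ : ℕ → ℕ) (u : List ℕ) : Prop :=
  IsCliff δ u ∧ List.Pairwise (· ≤ ·) u

/-- A `δ`-avalanche: a `δ`-cliff whose nonempty prefixes have small sums. -/
def IsAval (δ : ℕ → ℕ) (u : List ℕ) : Prop :=
  IsCliff δ u ∧ ∀ k < u.length, (u.take (k + 1)).sum ≤ δ k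

/-- A `δ`-canyon. -/
def IsCanyon (δ : ℕ → ℕ) (u : List ℕ) : Prop :=
  IsCliff δ u ∧ ∀ i < u.length, ∀ j, 1 ≤ j → j ≤ u.getD i 0 → j ≤ i →
    u.getD (i - j) 0 + j ≤ u.getD i 0

/-- The `δ`-reduction map. -/
def reduce (δ : ℕ → ℕ) (u : List ℕ) : List ℕ :=
  (List.range u.length).map fun i => min (u.getD i 0) (δ i)

/-- `δ` is valley-free. -/
def ValleyFree (δ : ℕ → ℕ) : Prop :=
  ¬ ∃ i₁ i₂ i₃ : ℕ, i₁ < i₂ ∧ i₂ < i₃ ∧ δ i₂ < δ i₁ ∧ δ i₂ < δ i₃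

namespace Stmt16

def lastD (p : List ℕ) : ℕ := p.getD (p.length - 1) 0

def Bset (p : List ℕ) : Finset ℕ :=
  (Finset.Icc 1 p.length).biUnion fun j => Finset.Ico j (p.getD (p.length - j) 0 + j)

lemma mem_Bset {p : List ℕ} {a : ℕ} :
    a ∈ Bset p ↔ ∃ j, 1 ≤ j ∧ j ≤ p.length ∧ j ≤ a ∧ a < p.getD (p.length - j) 0 + j := by
  simp only [Bset, Finset.mem_biUnion, Finset.mem_Icc, Finset.mem_Ico]
  constructor
  · rintro ⟨j, ⟨h1, h2⟩, h3, h4⟩; exact ⟨j, h1, h2, h3, h4⟩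
  · rintro ⟨j, h1, h2, h3, h4⟩; exact ⟨j, ⟨h1, h2⟩, h3, h4⟩

lemma Bset_nil : Bset [] = ∅ := by
  simp [Bset]

lemma delta_add {δ : ℕ → ℕ} (hδ : ∀ i, δ i < δ (i + 1)) (k m : ℕ) :
    δ k + m ≤ δ (k + m) := by
  induction m with
  | zero => simp
  | succ m ih =>
    have e : k + (m + 1) = (k + m) + 1 := by omega
    rw [e]; have := hδ (k + m); omega

lemma delta_mono {δ : ℕ → ℕ} (hδ : ∀ i, δ i < δ (i + 1)) {k m : ℕ} (h : k ≤ m) :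
    δ k ≤ δ m := by
  have := delta_add hδ k (m - k)
  have : δ k + (m - k) ≤ δ m := by rwa [Nat.add_sub_cancel' h] at this
  omega

lemma getD_mono {u v : List ℕ} (h : wle u v) (k : ℕ) : u.getD k 0 ≤ v.getD k 0 := by
  rw [wle, List.forall₂_iff_get] at h
  obtain ⟨hlen, hget⟩ := h
  by_cases hk : k < u.length
  · have := hget k hk (hlen ▸ hk)
    simpa [List.getD_eq_getElem?_getD, List.getElem?_eq_getElem hk,
      List.getElem?_eq_getElem (hlen ▸ hk)] using this
  · rw [List.getD_eq_default _ _ (le_of_not_gt hk)]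
    exact Nat.zero_le _

lemma Bset_mono {u v : List ℕ} (h : wle u v) : Bset u ⊆ Bset v := by
  have hlen : u.length = v.length := h.length_eq
  intro a ha
  rw [mem_Bset] at ha ⊢
  obtain ⟨j, h1, h2, h3, h4⟩ := ha
  refine ⟨j, h1, hlen ▸ h2, h3, ?_⟩
  have h5 : u.length - j = v.length - j := by omega
  rw [h5] at h4
  have := getD_mono h (v.length - j)
  omega

lemma wle_snoc {p q : List ℕ} {b c : ℕ} :
    wle (p ++ [b]) (q ++ [c]) ↔ b ≤ c ∧ wle p q := by
  rw [wle, wle, ← List.forall₂_reverse_iff]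
  simp only [List.reverse_append, List.reverse_singleton, List.singleton_append,
    List.forall₂_cons, List.forall₂_reverse_iff]


lemma lastD_snoc (p : List ℕ) (b : ℕ) : lastD (p ++ [b]) = b := by
  simp only [lastD, List.length_append, List.length_singleton, Nat.add_sub_cancel]
  rw [List.getD_append_right _ _ _ _ (le_refl _)]
  simp

lemma getD_snoc_left (p : List ℕ) (b : ℕ) {i : ℕ} (h : i < p.length) :
    (p ++ [b]).getD i 0 = p.getD i 0 :=
  List.getD_append _ _ _ _ h

lemma getD_snoc_last (p : List ℕ) (b : ℕ) : (p ++ [b]).getD p.length 0 = b := by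
  rw [List.getD_append_right _ _ _ _ (le_refl _)]
  simp

lemma cliff_append {δ : ℕ → ℕ} {p : List ℕ} {b : ℕ} :
    IsCliff δ (p ++ [b]) ↔ IsCliff δ p ∧ b ≤ δ p.length := by
  constructor
  · intro h
    refine ⟨fun i hi => ?_, ?_⟩
    · have := h i (by simp; omega)
      rwa [getD_snoc_left _ _ hi] at this
    · have := h p.length (by simp)
      rwa [getD_snoc_last] at this
  · rintro ⟨h1, h2⟩ i hi
    simp only [List.length_append, List.length_singleton] at hi
    rcases Nat.lt_or_ge i p.length with hlt | hge
    · rw [getD_snoc_left _ _ hlt]; exact h1 i hlt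
    · have : i = p.length := by omega
      subst this; rwa [getD_snoc_last]

lemma canyon_append {δ : ℕ → ℕ} {p : List ℕ} {b : ℕ} :
    IsCanyon δ (p ++ [b]) ↔ IsCanyon δ p ∧ b ≤ δ p.length ∧ b ∉ Bset p := by
  constructor
  · rintro ⟨hc, h⟩
    rw [cliff_append] at hc
    refine ⟨⟨hc.1, fun i hi j hj1 hj2 hj3 => ?_⟩, hc.2, ?_⟩
    · have := h i (by simp; omega) j hj1 (by rwa [getD_snoc_left _ _ hi]) hj3
      rwa [getD_snoc_left _ _ hi, getD_snoc_left _ _ (by omega : i - j < p.length)] at this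
    · rw [mem_Bset]
      rintro ⟨j, hj1, hj2, hj3, hj4⟩
      have := h p.length (by simp) j hj1 (by rwa [getD_snoc_last]) hj2
      rw [getD_snoc_last, getD_snoc_left _ _ (by omega : p.length - j < p.length)] at this
      omega
  · rintro ⟨⟨hc, h⟩, hb, hnb⟩
    refine ⟨cliff_append.mpr ⟨hc, hb⟩, fun i hi j hj1 hj2 hj3 => ?_⟩
    simp only [List.length_append, List.length_singleton] at hi
    rcases Nat.lt_or_ge i p.length with hlt | hge
    · rw [getD_snoc_left _ _ hlt] at hj2 ⊢
      rw [getD_snoc_left _ _ (by omega : i - j < p.length)]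
      exact h i hlt j hj1 hj2 hj3
    · have : i = p.length := by omega
      subst this
      rw [getD_snoc_last] at hj2 ⊢
      rw [getD_snoc_left _ _ (by omega : p.length - j < p.length)]
      by_contra hcon
      exact hnb (mem_Bset.mpr ⟨j, hj1, hj3, hj2, by omega⟩)

lemma mem_le_lastD {p : List ℕ} (hs : List.Pairwise (· ≤ ·) p) {a : ℕ} (ha : a ∈ p) :
    a ≤ lastD p := by
  induction p using List.reverseRecOn with
  | nil => simp at ha
  | append_singleton q x ih =>
    rw [lastD_snoc]
    rw [List.pairwise_append] at hs
    rcases List.mem_append.mp ha with h | h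
    · exact hs.2.2 a h x (by simp)
    · simp at h; omega

lemma hill_append {δ : ℕ → ℕ} {p : List ℕ} {b : ℕ} :
    IsHill δ (p ++ [b]) ↔ IsHill δ p ∧ b ≤ δ p.length ∧ lastD p ≤ b := by
  constructor
  · rintro ⟨hc, hs⟩
    rw [cliff_append] at hc
    rw [List.pairwise_append] at hs
    refine ⟨⟨hc.1, hs.1⟩, hc.2, ?_⟩
    rcases List.eq_nil_or_concat p with rfl | ⟨q, x, rfl⟩
    · simp [lastD]
    · rw [List.concat_eq_append] at hs ⊢
      rw [lastD_snoc]
      exact hs.2.2 x (by simp) b (by simp)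
  · rintro ⟨⟨hc, hs⟩, hb, hl⟩
    refine ⟨cliff_append.mpr ⟨hc, hb⟩, ?_⟩
    rw [List.pairwise_append]
    refine ⟨hs, by simp, fun a ha c hc' => ?_⟩
    simp only [List.mem_singleton] at hc'
    subst hc'
    exact le_trans (mem_le_lastD hs ha) hl


noncomputable def E (S : Set (List ℕ)) (p : List ℕ) (b : ℕ) : ℕ :=
  Set.ncard {a : ℕ | a < b ∧ p ++ [a] ∈ S}

lemma elev_length (S : Set (List ℕ)) (u : List ℕ) : (elev S u).length = u.length := by
  simp [elev]

lemma elev_append (S : Set (List ℕ)) (p : List ℕ) (b : ℕ) :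
    elev S (p ++ [b]) = elev S p ++ [E S p b] := by
  unfold elev
  rw [show (p ++ [b]).length = p.length + 1 by simp, List.range_succ, List.map_append]
  congr 1
  · apply List.map_congr_left
    intro i hi
    rw [List.mem_range] at hi
    rw [getD_snoc_left _ _ hi, List.take_append_of_le_length (le_of_lt hi)]
  · simp only [List.map_singleton, getD_snoc_last, List.take_left]
    rfl

lemma E_hill {δ : ℕ → ℕ} {p : List ℕ} {b : ℕ} (hp : IsHill δ p) (hb : b ≤ δ p.length) :
    E {x | IsHill δ x} p b = b - lastD p := by
  have hset : {a : ℕ | a < b ∧ p ++ [a] ∈ {x | IsHill δ x}} = ↑(Finset.Ico (lastD p) b) := by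
    ext a
    simp only [Set.mem_setOf_eq, Finset.coe_Ico, Set.mem_Ico, Set.mem_setOf_eq]
    constructor
    · rintro ⟨h1, h2⟩
      exact ⟨(hill_append.mp h2).2.2, h1⟩
    · rintro ⟨h1, h2⟩
      exact ⟨h2, hill_append.mpr ⟨hp, by omega, h1⟩⟩
  rw [E, hset, Set.ncard_coe_finset, Nat.card_Ico]

lemma E_canyon {δ : ℕ → ℕ} {p : List ℕ} {b : ℕ} (hp : IsCanyon δ p)
    (hb : ∀ a < b, a ≤ δ p.length) :
    E {x | IsCanyon δ x} p b = (Finset.range b \ Bset p).card := by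
  have hset : {a : ℕ | a < b ∧ p ++ [a] ∈ {x | IsCanyon δ x}} =
      ↑(Finset.range b \ Bset p) := by
    ext a
    simp only [Set.mem_setOf_eq, Finset.coe_sdiff, Set.mem_diff, Finset.coe_range,
      Set.mem_Iio, Finset.mem_coe]
    constructor
    · rintro ⟨h1, h2⟩
      exact ⟨h1, (canyon_append.mp h2).2.2⟩
    · rintro ⟨h1, h2⟩
      exact ⟨h1, canyon_append.mpr ⟨hp, hb a h1, h2⟩⟩
  rw [E, hset, Set.ncard_coe_finset]

lemma Bset_snoc (p : List ℕ) (b : ℕ) :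
    Bset (p ++ [b]) = (Bset p).image (· + 1) ∪ Finset.Ico 1 (b + 1) := by
  ext a
  simp only [Finset.mem_union, Finset.mem_image, Finset.mem_Ico, mem_Bset,
    List.length_append, List.length_singleton]
  constructor
  · rintro ⟨j, hj1, hj2, hj3, hj4⟩
    rcases Nat.eq_or_lt_of_le hj1 with h1 | h1
    · right
      rw [show p.length + 1 - j = p.length by omega, getD_snoc_last] at hj4
      omega
    · left
      have hidx : p.length + 1 - j < p.length := by omega
      rw [getD_snoc_left _ _ hidx] at hj4
      refine ⟨a - 1, ⟨j - 1, by omega, by omega, by omega, ?_⟩, by omega⟩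
      rw [show p.length - (j - 1) = p.length + 1 - j by omega]
      omega
  · rintro (⟨a', ⟨j, hj1, hj2, hj3, hj4⟩, rfl⟩ | h)
    · refine ⟨j + 1, by omega, by omega, by omega, ?_⟩
      have hidx : p.length + 1 - (j + 1) < p.length := by omega
      rw [getD_snoc_left _ _ hidx, show p.length + 1 - (j + 1) = p.length - j from by omega]
      omega
    · exact ⟨1, le_refl _, by omega, h.1, by rw [Nat.add_sub_cancel, getD_snoc_last]; omega⟩

lemma card_Bset_snoc (p : List ℕ) (b : ℕ) :
    (Bset (p ++ [b])).card = (Bset p).card + (Finset.range b \ Bset p).card := by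
  rw [Bset_snoc]
  have hinj : Function.Injective (· + 1 : ℕ → ℕ) := fun x y h => by simpa using h
  set X := (Bset p).image (· + 1) with hX
  set Y := Finset.Ico 1 (b + 1) with hY
  have himg : (Finset.range b).image (· + 1) = Y := by
    ext x; simp [hY, Finset.mem_image]; constructor
    · rintro ⟨a, h, rfl⟩; omega
    · intro h; exact ⟨x - 1, by omega, by omega⟩
  have hXY : X \ Y = (Bset p \ Finset.range b).image (· + 1) := by
    rw [Finset.image_sdiff _ _ hinj, himg]
  have h1 : (X ∪ Y).card = (X \ Y).card + Y.card := by
    rw [← Finset.card_union_of_disjoint (Finset.sdiff_disjoint), Finset.sdiff_union_self_eq_union]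
  rw [h1, hXY, Finset.card_image_of_injective _ hinj]
  have h2 : (Bset p \ Finset.range b).card + (Bset p ∩ Finset.range b).card = (Bset p).card :=
    Finset.card_sdiff_add_card_inter _ _
  have h3 : (Finset.range b \ Bset p).card + (Finset.range b ∩ Bset p).card
      = (Finset.range b).card := Finset.card_sdiff_add_card_inter _ _
  rw [Finset.card_range] at h3
  rw [Finset.inter_comm] at h2
  simp [hY, Nat.card_Ico]
  omega

lemma Bset_subset {δ : ℕ → ℕ} (hδ : ∀ i, δ i < δ (i + 1)) {p : List ℕ}
    (hp : IsCliff δ p) : Bset p ⊆ Finset.Icc 1 (δ (p.length - 1)) := by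
  intro a ha
  rw [mem_Bset] at ha
  obtain ⟨j, hj1, hj2, hj3, hj4⟩ := ha
  rw [Finset.mem_Icc]
  have hidx : p.length - j < p.length := by omega
  have hcliff := hp _ hidx
  have hadd := delta_add hδ (p.length - j) (j - 1)
  rw [show p.length - j + (j - 1) = p.length - 1 by omega] at hadd
  omega

lemma card_Bset_le {δ : ℕ → ℕ} (hδ : ∀ i, δ i < δ (i + 1)) {p : List ℕ}
    (hp : IsCliff δ p) : (Bset p).card ≤ δ (p.length - 1) := by
  have := Finset.card_le_card (Bset_subset hδ hp)
  rw [Nat.card_Icc] at this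
  omega


lemma match_length {S T : Set (List ℕ)} {w u : List ℕ}
    (h : elev S w = elev T u) : w.length = u.length := by
  have := congrArg List.length h
  rwa [elev_length, elev_length] at this

/-- Decompose a matched pair along a snoc of the canyon side. -/
lemma match_snoc {δ : ℕ → ℕ} {p : List ℕ} {b : ℕ} {w : List ℕ}
    (heq : elev {x | IsHill δ x} w = elev {x | IsCanyon δ x} (p ++ [b])) :
    ∃ s d, w = s ++ [d] ∧ elev {x | IsHill δ x} s = elev {x | IsCanyon δ x} p ∧
      E {x | IsHill δ x} s d = E {x | IsCanyon δ x} p b ∧ s.length = p.length := by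
  have hlen : w.length = p.length + 1 := by
    have := match_length heq; simpa using this
  rcases List.eq_nil_or_concat w with rfl | ⟨s, d, rfl⟩
  · simp at hlen
  rw [List.concat_eq_append] at hlen heq ⊢
  simp only [List.length_append, List.length_singleton] at hlen
  have hsl : s.length = p.length := by omega
  rw [elev_append, elev_append] at heq
  have hl2 : (elev {x | IsHill δ x} s).length = (elev {x | IsCanyon δ x} p).length := by
    rw [elev_length, elev_length, hsl]
  obtain ⟨h1, h2⟩ := List.append_inj heq hl2
  refine ⟨s, d, rfl, h1, ?_, hsl⟩
  simpa using h2

lemma match_lastD {δ : ℕ → ℕ} (hδ : ∀ i, δ i < δ (i + 1)) :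
    ∀ u w, IsCanyon δ u → IsHill δ w →
    elev {x | IsHill δ x} w = elev {x | IsCanyon δ x} u → lastD w = (Bset u).card := by
  intro u
  induction u using List.reverseRecOn with
  | nil =>
    intro w _ _ heq
    have : w.length = 0 := by simpa using match_length heq
    rw [List.length_eq_zero_iff] at this
    subst this
    simp [lastD, Bset_nil]
  | append_singleton p b ih =>
    intro w hu hw heq
    obtain ⟨s, d, rfl, h1, h2, hsl⟩ := match_snoc heq
    obtain ⟨hp, hb, hnb⟩ := canyon_append.mp hu
    obtain ⟨hs, hd, hld⟩ := hill_append.mp hw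
    have hEh : E {x | IsHill δ x} s d = d - lastD s := E_hill hs hd
    have hEc : E {x | IsCanyon δ x} p b = (Finset.range b \ Bset p).card :=
      E_canyon hp (fun a ha => by omega)
    have hBl : lastD s = (Bset p).card := ih s hp hs h1
    rw [lastD_snoc, card_Bset_snoc]
    rw [hEh, hEc] at h2
    omega

lemma inj_hill {δ : ℕ → ℕ} :
    ∀ w w', IsHill δ w → IsHill δ w' → w.length = w'.length →
    elev {x | IsHill δ x} w = elev {x | IsHill δ x} w' → w = w' := by
  intro w
  induction w using List.reverseRecOn with
  | nil =>
    intro w' _ _ hlen _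
    simp only [List.length_nil] at hlen
    exact (List.length_eq_zero_iff.mp hlen.symm).symm
  | append_singleton s d ih =>
    intro w' hw hw' hlen heq
    rcases List.eq_nil_or_concat w' with rfl | ⟨t, g, rfl⟩
    · simp at hlen
    rw [List.concat_eq_append] at *
    simp only [List.length_append, List.length_singleton] at hlen
    have hsl : s.length = t.length := by omega
    rw [elev_append, elev_append] at heq
    obtain ⟨h1, h2⟩ := List.append_inj heq (by rw [elev_length, elev_length, hsl])
    simp only [List.cons.injEq, and_true] at h2
    obtain ⟨hs, hd, hld⟩ := hill_append.mp hw
    obtain ⟨ht, hg, hlg⟩ := hill_append.mp hw'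
    have hst : s = t := ih t hs ht hsl h1
    subst hst
    rw [E_hill hs hd, E_hill hs hg] at h2
    have : d = g := by omega
    rw [this]

lemma rank_inj {B : Finset ℕ} {b b' : ℕ} (hb : b ∉ B) (hb' : b' ∉ B)
    (h : (Finset.range b \ B).card = (Finset.range b' \ B).card) : b = b' := by
  rcases lt_trichotomy b b' with hlt | heq | hlt
  · exfalso
    have hss : Finset.range b \ B ⊂ Finset.range b' \ B := by
      refine Finset.ssubset_iff_of_subset (Finset.sdiff_subset_sdiff
        (Finset.range_subset_range.mpr (le_of_lt hlt)) (le_refl _)) |>.mpr ?_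
      exact ⟨b, Finset.mem_sdiff.mpr ⟨Finset.mem_range.mpr hlt, hb⟩,
        fun hmem => by simp at hmem⟩
    exact absurd h (Nat.ne_of_lt (Finset.card_lt_card hss))
  · exact heq
  · exfalso
    have hss : Finset.range b' \ B ⊂ Finset.range b \ B := by
      refine Finset.ssubset_iff_of_subset (Finset.sdiff_subset_sdiff
        (Finset.range_subset_range.mpr (le_of_lt hlt)) (le_refl _)) |>.mpr ?_
      exact ⟨b', Finset.mem_sdiff.mpr ⟨Finset.mem_range.mpr hlt, hb'⟩,
        fun hmem => by simp at hmem⟩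
    exact absurd h.symm (Nat.ne_of_lt (Finset.card_lt_card hss))

lemma inj_canyon {δ : ℕ → ℕ} :
    ∀ u u', IsCanyon δ u → IsCanyon δ u' → u.length = u'.length →
    elev {x | IsCanyon δ x} u = elev {x | IsCanyon δ x} u' → u = u' := by
  intro u
  induction u using List.reverseRecOn with
  | nil =>
    intro u' _ _ hlen _
    simp only [List.length_nil] at hlen
    exact (List.length_eq_zero_iff.mp hlen.symm).symm
  | append_singleton p b ih =>
    intro u' hu hu' hlen heq
    rcases List.eq_nil_or_concat u' with rfl | ⟨q, c, rfl⟩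
    · simp at hlen
    rw [List.concat_eq_append] at *
    simp only [List.length_append, List.length_singleton] at hlen
    have hpl : p.length = q.length := by omega
    rw [elev_append, elev_append] at heq
    obtain ⟨h1, h2⟩ := List.append_inj heq (by rw [elev_length, elev_length, hpl])
    simp only [List.cons.injEq, and_true] at h2
    obtain ⟨hp, hb, hnb⟩ := canyon_append.mp hu
    obtain ⟨hq, hc, hnc⟩ := canyon_append.mp hu'
    have hpq : p = q := ih q hp hq hpl h1
    subst hpq
    rw [E_canyon hp (fun a ha => by omega), E_canyon hp (fun a ha => by omega)] at h2
    rw [rank_inj hnb hnc h2]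


lemma exists_hill {δ : ℕ → ℕ} (hδ : ∀ i, δ i < δ (i + 1)) :
    ∀ u, IsCanyon δ u → ∃ w, IsHill δ w ∧ w.length = u.length ∧
      elev {x | IsHill δ x} w = elev {x | IsCanyon δ x} u := by
  intro u
  induction u using List.reverseRecOn with
  | nil =>
    intro _
    exact ⟨[], ⟨fun i hi => by simp at hi, List.Pairwise.nil⟩, rfl, rfl⟩
  | append_singleton p b ih =>
    intro hu
    obtain ⟨hp, hb, hnb⟩ := canyon_append.mp hu
    obtain ⟨w, hw, hwlen, hmatch⟩ := ih hp
    have hBl : lastD w = (Bset p).card := match_lastD hδ p w hp hw hmatch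
    have hrec : (Bset (p ++ [b])).card
        = (Bset p).card + (Finset.range b \ Bset p).card := card_Bset_snoc p b
    have hc1 : lastD w ≤ (Bset (p ++ [b])).card := by omega
    have hc2 : (Bset (p ++ [b])).card ≤ δ p.length := by
      have := card_Bset_le hδ hu.1
      simpa using this
    have hwhill : IsHill δ (w ++ [(Bset (p ++ [b])).card]) :=
      hill_append.mpr ⟨hw, by rwa [hwlen], hc1⟩
    refine ⟨w ++ [(Bset (p ++ [b])).card], hwhill, by simp [hwlen], ?_⟩
    have hEE : E {x | IsHill δ x} w (Bset (p ++ [b])).card = E {x | IsCanyon δ x} p b := by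
      rw [E_hill hw (by rwa [hwlen]), E_canyon hp (fun a ha => by omega)]
      omega
    rw [elev_append, elev_append, hmatch, hEE]

lemma exists_canyon {δ : ℕ → ℕ} (hδ : ∀ i, δ i < δ (i + 1)) :
    ∀ w, IsHill δ w → ∃ u, IsCanyon δ u ∧ u.length = w.length ∧
      elev {x | IsCanyon δ x} u = elev {x | IsHill δ x} w := by
  intro w
  induction w using List.reverseRecOn with
  | nil =>
    intro _
    exact ⟨[], ⟨fun i hi => by simp at hi, fun i hi => by simp at hi⟩, rfl, rfl⟩
  | append_singleton s c ih =>
    intro hw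
    obtain ⟨hs, hc, hls⟩ := hill_append.mp hw
    obtain ⟨u, hu, hulen, hmatch⟩ := ih hs
    have hBl : lastD s = (Bset u).card := match_lastD hδ u s hu hs hmatch.symm
    have hBsub : Bset u ⊆ Finset.range (δ u.length + 1) := by
      intro a ha
      have h1 := Bset_subset hδ hu.1 ha
      rw [Finset.mem_Icc] at h1
      have h2 := delta_mono hδ (Nat.sub_le u.length 1)
      rw [Finset.mem_range]
      omega
    have hVcard : (Finset.range (δ u.length + 1) \ Bset u).card
        = δ u.length + 1 - (Bset u).card := by
      rw [Finset.card_sdiff_of_subset hBsub, Finset.card_range]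
    have hBle : (Bset u).card ≤ δ u.length + 1 := by
      have := Finset.card_le_card hBsub
      simpa using this
    have hcδ : c ≤ δ u.length := by rwa [hulen]
    have helt : c - lastD s < (Finset.range (δ u.length + 1) \ Bset u).card := by omega
    have hf : {x | x ∈ Finset.range (δ u.length + 1) \ Bset u}.Finite :=
      (Finset.range (δ u.length + 1) \ Bset u).finite_toSet
    have htf : hf.toFinset = Finset.range (δ u.length + 1) \ Bset u := by ext x; simp
    have helt' : c - lastD s < hf.toFinset.card := by rwa [htf]
    have hbV : Nat.nth (· ∈ Finset.range (δ u.length + 1) \ Bset u) (c - lastD s)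
        ∈ Finset.range (δ u.length + 1) \ Bset u := Nat.nth_mem_of_lt_card hf helt'
    have hcount := Nat.count_nth_of_lt_card_finite hf helt'
    obtain ⟨b, hbdef⟩ : ∃ b, Nat.nth (· ∈ Finset.range (δ u.length + 1) \ Bset u)
        (c - lastD s) = b := ⟨_, rfl⟩
    rw [hbdef] at hbV hcount
    rw [Finset.mem_sdiff, Finset.mem_range] at hbV
    obtain ⟨hblt, hbnB⟩ := hbV
    have hbδ : b ≤ δ u.length := by omega
    have hucanyon : IsCanyon δ (u ++ [b]) := canyon_append.mpr ⟨hu, hbδ, hbnB⟩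
    have hEeq : E {x | IsCanyon δ x} u b = c - lastD s := by
      rw [E_canyon hu (fun a ha => by omega)]
      rw [Nat.count_eq_card_filter_range] at hcount
      rw [← hcount]
      congr 1
      ext x
      simp only [Finset.mem_sdiff, Finset.mem_range, Finset.mem_filter]
      constructor
      · rintro ⟨h1, h2⟩; exact ⟨h1, by omega, h2⟩
      · rintro ⟨h1, _, h3⟩; exact ⟨h1, h3⟩
    have hEE : E {x | IsCanyon δ x} u b = E {x | IsHill δ x} s c := by
      rw [hEeq, E_hill hs hc]
    refine ⟨u ++ [b], hucanyon, by simp [hulen], ?_⟩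
    rw [elev_append, elev_append, hmatch, hEE]

lemma mono_lemma {δ : ℕ → ℕ} (hδ : ∀ i, δ i < δ (i + 1)) :
    ∀ u v w w', IsCanyon δ u → IsCanyon δ v → IsHill δ w → IsHill δ w' →
    elev {x | IsHill δ x} w = elev {x | IsCanyon δ x} u →
    elev {x | IsHill δ x} w' = elev {x | IsCanyon δ x} v →
    wle u v → wle w w' := by
  intro u
  induction u using List.reverseRecOn with
  | nil =>
    intro v w w' _ _ _ _ hmw hmw' huv
    have hv : v = [] := List.forall₂_nil_left_iff.mp huv
    subst hv
    have h1 : w.length = 0 := by simpa using match_length hmw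
    have h2 : w'.length = 0 := by simpa using match_length hmw'
    rw [List.length_eq_zero_iff] at h1 h2
    subst h1; subst h2
    exact List.Forall₂.nil
  | append_singleton p b ih =>
    intro v w w' hu hv hw hw' hmw hmw' huv
    have hvlen : v.length = p.length + 1 := by
      have := huv.length_eq; simpa using this.symm
    rcases List.eq_nil_or_concat v with rfl | ⟨q, c, rfl⟩
    · simp at hvlen
    rw [List.concat_eq_append] at *
    obtain ⟨hbc, hpq⟩ := wle_snoc.mp huv
    obtain ⟨s, d, rfl, hms, hEs, hsl⟩ := match_snoc hmw
    obtain ⟨t, g, rfl, hmt, hEt, htl⟩ := match_snoc hmw'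
    obtain ⟨hp, _, _⟩ := canyon_append.mp hu
    obtain ⟨hq, _, _⟩ := canyon_append.mp hv
    obtain ⟨hs', _, _⟩ := hill_append.mp hw
    obtain ⟨ht', _, _⟩ := hill_append.mp hw'
    have hst : wle s t := ih q s t hp hq hs' ht' hms hmt hpq
    have hd : d = (Bset (p ++ [b])).card := by
      have := match_lastD hδ (p ++ [b]) (s ++ [d]) hu hw hmw
      rwa [lastD_snoc] at this
    have hg : g = (Bset (q ++ [c])).card := by
      have := match_lastD hδ (q ++ [c]) (t ++ [g]) hv hw' hmw'
      rwa [lastD_snoc] at this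
    have hdg : d ≤ g := by
      rw [hd, hg]
      exact Finset.card_le_card (Bset_mono huv)
    exact wle_snoc.mpr ⟨hdg, hst⟩

end Stmt16

/-- For an increasing range map `δ` and `n ≥ 0`, there is a unique
map `f : Ca_δ(n) → Hi_δ(n)` with `e_{Hi_δ}(f(u)) = e_{Ca_δ}(u)` for all `u ∈ Ca_δ(n)`;
this map `f = e_{Hi_δ}⁻¹ ∘ e_{Ca_δ}` is a bijection from `Ca_δ(n)` to `Hi_δ(n)` and a
poset morphism (`u ≼ v` implies `f(u) ≼ f(v)`); in particular `Hi_δ(n)` is an order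
extension of `Ca_δ(n)`. -/
theorem stmt16 (δ : ℕ → ℕ) (hδ : ∀ i, δ i < δ (i + 1)) (n : ℕ) :
    (∀ u, IsCanyon δ u → u.length = n →
      ∃! w, (IsHill δ w ∧ w.length = n) ∧
        elev {x | IsHill δ x} w = elev {x | IsCanyon δ x} u) ∧
    (∀ f : List ℕ → List ℕ,
      (∀ u, IsCanyon δ u → u.length = n →
        IsHill δ (f u) ∧ (f u).length = n ∧
          elev {x | IsHill δ x} (f u) = elev {x | IsCanyon δ x} u) →
      (Set.BijOn f {u | IsCanyon δ u ∧ u.length = n} {w | IsHill δ w ∧ w.length = n} ∧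
       ∀ u v, IsCanyon δ u → IsCanyon δ v → u.length = n → v.length = n →
         wle u v → wle (f u) (f v))) := by
  constructor
  · intro u hu hulen
    obtain ⟨w, hw, hwlen, hmatch⟩ := Stmt16.exists_hill hδ u hu
    refine ⟨w, ⟨⟨hw, by omega⟩, hmatch⟩, ?_⟩
    rintro w' ⟨⟨hw', hw'len⟩, hmatch'⟩
    exact Stmt16.inj_hill w' w hw' hw (by omega) (by rw [hmatch', hmatch])
  · intro f hf
    constructor
    · refine ⟨?_, ?_, ?_⟩
      · rintro u ⟨hu, hul⟩
        obtain ⟨h1, h2, _⟩ := hf u hu hul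
        exact ⟨h1, h2⟩
      · rintro u ⟨hu, hul⟩ v ⟨hv, hvl⟩ hfeq
        obtain ⟨_, _, h3⟩ := hf u hu hul
        obtain ⟨_, _, h3'⟩ := hf v hv hvl
        refine Stmt16.inj_canyon u v hu hv (by omega) ?_
        rw [← h3, ← h3', hfeq]
      · rintro w ⟨hw, hwl⟩
        obtain ⟨u, hu, hulen, humatch⟩ := Stmt16.exists_canyon hδ w hw
        have hul : u.length = n := by omega
        obtain ⟨h1, h2, h3⟩ := hf u hu hul
        refine ⟨u, ⟨hu, hul⟩, ?_⟩
        exact Stmt16.inj_hill (f u) w h1 hw (by omega) (by rw [h3, humatch])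
    · intro u v hu hv hul hvl huv
      obtain ⟨h1, h2, h3⟩ := hf u hu hul
      obtain ⟨h1', h2', h3'⟩ := hf v hv hvl
      exact Stmt16.mono_lemma hδ u v (f u) (f v) hu hv h1 h1' h3 h3' huv
end

section
/- Let δ be a range map and 𝕂 a field of characteristic 0. On the free 𝕂-vector space 𝐂𝐥_δ with basis {F_u : u a δ-cliff of any size}, consider the bilinear product determined on the basis by F_u · F_v = Σ F_{uv'}, the sum ranging over all words v' ∈ ℕ^{|v|} such that r_δ(v') = v and the concatenation uv' is a δ-cliff. Then 𝐂𝐥_δ is a unital graded magmatic algebra with unit F_ε (ε the empty word), and the product is associative if and only if δ is valley-free. -/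
/-- The type of `δ`-cliffs (of all sizes). -/
def Cliffs (δ : ℕ → ℕ) : Type := {u : List ℕ // IsCliff δ u}

/-- The empty `δ`-cliff `ε`. -/
def epsCliff (δ : ℕ → ℕ) : Cliffs δ :=
  ⟨[], fun i hi => absurd hi (by simp)⟩

open Classical in
/-- The product `F_u · F_v = Σ F_{u v'}`, summed over the words `v'` with
`r_δ(v') = v` such that the concatenation `u v'` is a `δ`-cliff. -/
noncomputable def mulBasis (δ : ℕ → ℕ) (K : Type*) [Field K] (u v : Cliffs δ) :
    Cliffs δ →₀ K :=
  ∑ᶠ w : Cliffs δ,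
    if ∃ v' : List ℕ, w.1 = u.1 ++ v' ∧ reduce δ v' = v.1
    then Finsupp.single w (1 : K) else 0

/-- The bilinear extension of `mulBasis` to the free vector space `𝐂𝐥_δ` with basis
`{F_u : u ∈ Cl_δ}`, realized as `Cliffs δ →₀ K`. -/
noncomputable def mulCl (δ : ℕ → ℕ) (K : Type*) [Field K]
    (f g : Cliffs δ →₀ K) : Cliffs δ →₀ K :=
  f.sum fun u a => g.sum fun v b => (a * b) • mulBasis δ K u v

namespace St17

lemma reduce_length (δ : ℕ → ℕ) (u : List ℕ) : (reduce δ u).length = u.length := by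
  simp [reduce]

lemma reduce_getD (δ : ℕ → ℕ) (u : List ℕ) {i : ℕ} (h : i < u.length) :
    (reduce δ u).getD i 0 = min (u.getD i 0) (δ i) := by
  rw [List.getD_eq_getElem _ 0 (by simpa [reduce_length] using h)]
  simp [reduce]

lemma reduce_eq_iff {δ : ℕ → ℕ} {u v : List ℕ} :
    reduce δ u = v ↔ u.length = v.length ∧ ∀ i < u.length, min (u.getD i 0) (δ i) = v.getD i 0 := by
  constructor
  · rintro rfl
    exact ⟨(reduce_length δ u).symm, fun i hi => (reduce_getD δ u hi).symm⟩
  · rintro ⟨hl, h⟩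
    apply List.ext_getElem (by simp [reduce_length, hl])
    intro n h1 h2
    have hn : n < u.length := by simpa [reduce_length] using h1
    have := h n hn
    rw [List.getD_eq_getElem _ 0 hn, List.getD_eq_getElem _ 0 h2] at this
    rw [← this, ← List.getD_eq_getElem _ 0 h1, reduce_getD δ u hn,
      List.getD_eq_getElem _ 0 hn]

lemma reduce_eq_self {δ : ℕ → ℕ} {u : List ℕ} (h : IsCliff δ u) : reduce δ u = u :=
  reduce_eq_iff.2 ⟨rfl, fun i hi => min_eq_left (h i hi)⟩

lemma isCliff_prefix {δ : ℕ → ℕ} {u v : List ℕ} (h : IsCliff δ (u ++ v)) : IsCliff δ u := by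
  intro i hi
  have := h i (by simp; omega)
  rwa [List.getD_append _ _ _ _ hi] at this

lemma finite_cliffs_len (δ : ℕ → ℕ) (n : ℕ) : {w : Cliffs δ | w.1.length = n}.Finite := by
  have h1 : ((Set.univ : Set (Fin n)).pi fun i : Fin n => Set.Iic (δ (i : ℕ))).Finite :=
    Set.Finite.pi (κ := fun _ : Fin n => ℕ) (t := fun i : Fin n => Set.Iic (δ (i : ℕ)))
      fun i => Set.finite_Iic _
  apply Set.Finite.of_finite_image (f := fun w : Cliffs δ => fun i : Fin n => w.1.getD (i : ℕ) 0)
  · apply h1.subset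
    rintro _ ⟨w, hw, rfl⟩
    intro i _
    exact w.2 (i : ℕ) (by simp only [Set.mem_setOf_eq] at hw; omega)
  · intro w hw w' hw' heq
    simp only [Set.mem_setOf_eq] at hw hw'
    have hlen : w.1.length = w'.1.length := by rw [hw, hw']
    apply Subtype.ext
    apply List.ext_getElem hlen
    intro i h1' h2'
    have hin : i < n := by omega
    have := congrFun heq ⟨i, hin⟩
    simp only at this
    rwa [List.getD_eq_getElem _ 0 h1', List.getD_eq_getElem _ 0 h2'] at this


/-- `z` appears in the product `u · v`. -/
def Pl (δ : ℕ → ℕ) (u v z : Cliffs δ) : Prop :=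
  ∃ v' : List ℕ, z.1 = u.1 ++ v' ∧ reduce δ v' = v.1

lemma Pl_len {δ : ℕ → ℕ} {u v z : Cliffs δ} (h : Pl δ u v z) :
    z.1.length = u.1.length + v.1.length := by
  obtain ⟨v', h1, h2⟩ := h
  have : v'.length = v.1.length := by rw [← h2, reduce_length]
  simp [h1, this]

open Classical in
lemma mulBasis_apply (δ : ℕ → ℕ) (K : Type*) [Field K] (u v z : Cliffs δ) :
    mulBasis δ K u v z = if Pl δ u v z then (1 : K) else 0 := by
  classical
  set g : Cliffs δ → (Cliffs δ →₀ K) :=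
    fun w => if ∃ v' : List ℕ, w.1 = u.1 ++ v' ∧ reduce δ v' = v.1
      then Finsupp.single w (1 : K) else 0 with hg
  have hsupp : (Function.support g).Finite := by
    apply (finite_cliffs_len δ (u.1.length + v.1.length)).subset
    intro w hw
    simp only [Function.mem_support, hg] at hw
    by_cases h : ∃ v' : List ℕ, w.1 = u.1 ++ v' ∧ reduce δ v' = v.1
    · exact Pl_len h
    · simp [h] at hw
  have h1 : mulBasis δ K u v z = (Finsupp.applyAddHom z) (∑ᶠ w, g w) := rfl
  rw [h1, AddMonoidHom.map_finsum _ hsupp]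
  rw [finsum_eq_single _ z]
  · simp only [Finsupp.applyAddHom_apply, hg, Pl]
    by_cases h : ∃ v' : List ℕ, z.1 = u.1 ++ v' ∧ reduce δ v' = v.1
    · simp [h]
    · simp [h]
  · intro x hx
    simp only [Finsupp.applyAddHom_apply, hg]
    by_cases h : ∃ v' : List ℕ, x.1 = u.1 ++ v' ∧ reduce δ v' = v.1
    · simp [h, Finsupp.single_eq_of_ne' hx]
    · simp [h]


variable (δ : ℕ → ℕ) (K : Type*) [Field K]

/-- The multiplication as a bilinear map. -/
noncomputable def Bl : (Cliffs δ →₀ K) →ₗ[K] (Cliffs δ →₀ K) →ₗ[K] (Cliffs δ →₀ K) :=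
  Finsupp.lsum K fun u => LinearMap.toSpanSingleton K _
    (Finsupp.lsum K fun v => LinearMap.toSpanSingleton K _ (mulBasis δ K u v))

lemma mulCl_eq (f g : Cliffs δ →₀ K) : mulCl δ K f g = Bl δ K f g := by
  rw [Bl, Finsupp.lsum_apply, mulCl, Finsupp.sum, Finsupp.sum, LinearMap.sum_apply]
  apply Finset.sum_congr rfl
  intro u _
  rw [LinearMap.toSpanSingleton_apply, LinearMap.smul_apply, Finsupp.lsum_apply,
    Finsupp.smul_sum]
  apply Finset.sum_congr rfl
  intro v _
  simp [LinearMap.toSpanSingleton_apply, smul_smul]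

lemma Bl_single_single (u v : Cliffs δ) :
    Bl δ K (Finsupp.single u 1) (Finsupp.single v 1) = mulBasis δ K u v := by
  rw [Bl, Finsupp.lsum_single, LinearMap.toSpanSingleton_apply, one_smul,
    Finsupp.lsum_single, LinearMap.toSpanSingleton_apply, one_smul]

lemma Bl_single_left (u : Cliffs δ) (g : Cliffs δ →₀ K) :
    Bl δ K (Finsupp.single u 1) g = g.sum fun v b => b • mulBasis δ K u v := by
  rw [Bl, Finsupp.lsum_single, LinearMap.toSpanSingleton_apply, one_smul,
    Finsupp.lsum_apply]
  apply Finset.sum_congr rfl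
  intro v _
  simp [LinearMap.toSpanSingleton_apply]

lemma Bl_single_right (f : Cliffs δ →₀ K) (w : Cliffs δ) :
    Bl δ K f (Finsupp.single w 1) = f.sum fun y a => a • mulBasis δ K y w := by
  rw [Bl, Finsupp.lsum_apply, Finsupp.sum, Finsupp.sum, LinearMap.sum_apply]
  apply Finset.sum_congr rfl
  intro y _
  rw [LinearMap.toSpanSingleton_apply, LinearMap.smul_apply, Finsupp.lsum_single,
    LinearMap.toSpanSingleton_apply, one_smul]


open Classical in
lemma sum_ind (f : Cliffs δ →₀ K) (Q R : Cliffs δ → Prop)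
    (hf : ∀ y, f y = if Q y then (1 : K) else 0)
    (huniq : ∀ y y', Q y → R y → Q y' → R y' → y = y') :
    (f.sum fun y a => a * (if R y then (1 : K) else 0)) =
      if ∃ y, Q y ∧ R y then (1 : K) else 0 := by
  have hQs : ∀ y ∈ f.support, Q y := by
    intro y hy
    rw [Finsupp.mem_support_iff, hf y] at hy
    by_contra h
    simp [h] at hy
  by_cases hex : ∃ y, Q y ∧ R y
  · obtain ⟨y₀, hQ, hR⟩ := hex
    rw [if_pos ⟨y₀, hQ, hR⟩, Finsupp.sum, Finset.sum_eq_single y₀]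
    · rw [hf y₀, if_pos hQ, if_pos hR, one_mul]
    · intro y hy hne
      by_cases hRy : R y
      · exact absurd (huniq y y₀ (hQs y hy) hRy hQ hR) hne
      · simp [hRy]
    · intro hy₀
      exfalso
      apply hy₀
      rw [Finsupp.mem_support_iff, hf y₀, if_pos hQ]
      exact one_ne_zero
  · rw [if_neg hex, Finsupp.sum]
    apply Finset.sum_eq_zero
    intro y hy
    by_cases hRy : R y
    · exact absurd ⟨y, hQs y hy, hRy⟩ hex
    · simp [hRy]

lemma uniq1 {δ : ℕ → ℕ} {u v w z : Cliffs δ} :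
    ∀ y y' : Cliffs δ, Pl δ u v y → Pl δ y w z → Pl δ u v y' → Pl δ y' w z → y = y' := by
  have key : ∀ y : Cliffs δ, Pl δ u v y → Pl δ y w z →
      y.1 = z.1.take (u.1.length + v.1.length) := by
    intro y h1 h2
    obtain ⟨s, hz, -⟩ := h2
    rw [hz, ← Pl_len h1, List.take_left]
  intro y y' a b c d
  exact Subtype.ext ((key y a b).trans (key y' c d).symm)

lemma uniq2 {δ : ℕ → ℕ} {u z : Cliffs δ} :
    ∀ y y' : Cliffs δ, Pl δ u y z → Pl δ u y' z → y = y' := by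
  have key : ∀ y : Cliffs δ, Pl δ u y z → y.1 = reduce δ (z.1.drop u.1.length) := by
    intro y h
    obtain ⟨c, hz, hrc⟩ := h
    rw [hz, List.drop_left, hrc]
  intro y y' a b
  exact Subtype.ext ((key y a).trans (key y' b).symm)

open Classical in
lemma coeff_left (u v w z : Cliffs δ) :
    (Bl δ K (mulBasis δ K u v) (Finsupp.single w 1)) z =
      if ∃ y, Pl δ u v y ∧ Pl δ y w z then (1 : K) else 0 := by
  rw [Bl_single_right]
  have h : ((mulBasis δ K u v).sum fun y a => a • mulBasis δ K y w) z =
      (mulBasis δ K u v).sum fun y a => a * (if Pl δ y w z then (1 : K) else 0) := by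
    rw [Finsupp.sum_apply]
    exact Finset.sum_congr rfl fun y _ => by
      simp only [Finsupp.smul_apply, smul_eq_mul, mulBasis_apply]
  rw [h]
  exact sum_ind δ K _ _ _ (fun y => mulBasis_apply δ K u v y) uniq1

open Classical in
lemma coeff_right (u v w z : Cliffs δ) :
    (Bl δ K (Finsupp.single u 1) (mulBasis δ K v w)) z =
      if ∃ y, Pl δ v w y ∧ Pl δ u y z then (1 : K) else 0 := by
  rw [Bl_single_left]
  have h : ((mulBasis δ K v w).sum fun y b => b • mulBasis δ K u y) z =
      (mulBasis δ K v w).sum fun y b => b * (if Pl δ u y z then (1 : K) else 0) := by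
    rw [Finsupp.sum_apply]
    exact Finset.sum_congr rfl fun y _ => by
      simp only [Finsupp.smul_apply, smul_eq_mul, mulBasis_apply]
  rw [h]
  exact sum_ind δ K _ _ _ (fun y => mulBasis_apply δ K v w y)
    (fun y y' _ hb _ hd => uniq2 y y' hb hd)

lemma mulBasis_eps_left (v : Cliffs δ) :
    mulBasis δ K (epsCliff δ) v = Finsupp.single v 1 := by
  classical
  ext z
  rw [mulBasis_apply, Finsupp.single_apply]
  congr 1
  simp only [eq_iff_iff]
  constructor
  · rintro ⟨v', hz, hr⟩
    simp only [epsCliff, List.nil_append] at hz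
    subst hz
    exact Subtype.ext (by rw [← hr, reduce_eq_self z.2])
  · rintro rfl
    exact ⟨v.1, by simp [epsCliff], reduce_eq_self v.2⟩

lemma mulBasis_eps_right (u : Cliffs δ) :
    mulBasis δ K u (epsCliff δ) = Finsupp.single u 1 := by
  classical
  ext z
  rw [mulBasis_apply, Finsupp.single_apply]
  congr 1
  simp only [eq_iff_iff]
  constructor
  · rintro ⟨v', hz, hr⟩
    have : v'.length = 0 := by
      have := reduce_length δ v'
      rw [hr] at this
      simpa [epsCliff] using this.symm
    rw [List.length_eq_zero_iff] at this
    subst this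
    exact Subtype.ext (by simp [hz])
  · rintro rfl
    exact ⟨[], by simp, by simp [reduce, epsCliff]⟩


lemma minClaim {δ : ℕ → ℕ} (hvf : ValleyFree δ) (p m j b : ℕ) (hb : b ≤ δ (p + m + j)) :
    min (min b (δ (m + j))) (δ j) = min b (δ j) := by
  rcases Nat.eq_zero_or_pos p with hp | hp
  · subst hp
    simp only [Nat.zero_add] at hb
    omega
  rcases Nat.eq_zero_or_pos m with hm | hm
  · subst hm
    simp only [Nat.zero_add] at *
    omega
  have h2 : ¬(δ (m + j) < δ j ∧ δ (m + j) < δ (p + m + j)) := by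
    rintro ⟨h1, h2⟩
    exact hvf ⟨j, m + j, p + m + j, by omega, by omega, h1, h2⟩
  omega

lemma reduce_comp {δ : ℕ → ℕ} {b w : List ℕ} (h : reduce δ b = w) :
    ∀ j < b.length, min (b.getD j 0) (δ j) = w.getD j 0 :=
  (reduce_eq_iff.1 h).2

lemma E_core {δ : ℕ → ℕ} (hvf : ValleyFree δ) (u v w z : Cliffs δ) :
    (∃ y, Pl δ u v y ∧ Pl δ y w z) ↔ (∃ y, Pl δ v w y ∧ Pl δ u y z) := by
  set p := u.1.length with hp
  set m := v.1.length with hm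
  constructor
  · rintro ⟨y, ⟨a, hya, hra⟩, ⟨b, hzb, hrb⟩⟩
    have ham : a.length = m := by rw [hm, ← hra, reduce_length]
    have hbw : b.length = w.1.length := by rw [← hrb, reduce_length]
    have hylen : y.1.length = p + m := by rw [hya]; simp [ham, hp]
    have hbz : ∀ j < b.length, b.getD j 0 ≤ δ (p + m + j) := by
      intro j hj
      have hl : p + m + j < z.1.length := by rw [hzb]; simp [hylen]; omega
      have h := z.2 (p + m + j) hl
      rwa [hzb, List.getD_append_right _ _ _ _ (by omega), hylen,
        show p + m + j - (p + m) = j by omega] at h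
    set r := reduce (fun i => δ (m + i)) b with hr
    have hrlen : r.length = b.length := reduce_length _ b
    have hrget : ∀ j < b.length, r.getD j 0 = min (b.getD j 0) (δ (m + j)) :=
      fun j hj => reduce_getD _ b hj
    have hy'cliff : IsCliff δ (v.1 ++ r) := by
      intro i hi
      simp only [List.length_append, hrlen] at hi
      rcases Nat.lt_or_ge i m with him | him
      · rw [List.getD_append _ _ _ _ (by omega)]
        exact v.2 i (by omega)
      · rw [List.getD_append_right _ _ _ _ (by omega), ← hm,
          hrget (i - m) (by omega)]
        have : m + (i - m) = i := by omega
        rw [this]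
        exact le_trans (min_le_right _ _) le_rfl
    refine ⟨⟨v.1 ++ r, hy'cliff⟩, ⟨r, rfl, ?_⟩, ⟨a ++ b, ?_, ?_⟩⟩
    · -- reduce δ r = w.1
      rw [reduce_eq_iff]
      refine ⟨by rw [hrlen, hbw], fun j hj => ?_⟩
      rw [hrlen] at hj
      rw [hrget j hj, minClaim hvf p m j _ (hbz j hj), reduce_comp hrb j hj]
    · rw [hzb, hya, List.append_assoc]
    · -- reduce δ (a ++ b) = v.1 ++ r
      rw [reduce_eq_iff]
      constructor
      · simp [ham, hrlen, hm]
      intro i hi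
      simp only [List.length_append, ham] at hi
      rcases Nat.lt_or_ge i m with him | him
      · rw [List.getD_append _ _ _ _ (by omega), List.getD_append _ _ _ _ (by omega)]
        exact reduce_comp hra i (by omega)
      · rw [List.getD_append_right _ _ _ _ (by rw [ham]; omega),
          List.getD_append_right _ _ _ _ (by rw [← hm]; omega), ham, ← hm,
          hrget (i - m) (by omega), show m + (i - m) = i by omega]
  · rintro ⟨y', ⟨b', hy', hrb'⟩, ⟨c, hzc, hrc⟩⟩
    have hb'w : b'.length = w.1.length := by rw [← hrb', reduce_length]
    have hclen : c.length = m + b'.length := by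
      rw [← reduce_length δ c, hrc, hy']; simp [hm]
    set a := c.take m with ha
    set b := c.drop m with hb
    have hab : a ++ b = c := List.take_append_drop m c
    have halen : a.length = m := by rw [ha, List.length_take]; omega
    have hblen : b.length = b'.length := by rw [hb, List.length_drop]; omega
    have hcget : ∀ i < c.length, min (c.getD i 0) (δ i) = y'.1.getD i 0 :=
      reduce_comp hrc
    have hca : ∀ i < m, c.getD i 0 = a.getD i 0 := by
      intro i hi
      rw [← hab, List.getD_append _ _ _ _ (by omega)]
    have hcb : ∀ j < b.length, c.getD (m + j) 0 = b.getD j 0 := by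
      intro j hj
      rw [← hab, List.getD_append_right _ _ _ _ (by omega), halen,
        show m + j - m = j by omega]
    have hycliff : IsCliff δ (u.1 ++ a) := by
      have h := z.2
      rw [hzc, ← hab, ← List.append_assoc] at h
      exact isCliff_prefix h
    have hbz : ∀ j < b.length, b.getD j 0 ≤ δ (p + m + j) := by
      intro j hj
      have hl : p + m + j < z.1.length := by
        rw [hzc]; simp only [List.length_append, ← hp, hclen]; omega
      have h := z.2 (p + m + j) hl
      rwa [hzc, List.getD_append_right _ _ _ _ (by omega), ← hp,
        show p + m + j - p = m + j by omega, hcb j hj] at h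
    refine ⟨⟨u.1 ++ a, hycliff⟩, ⟨a, rfl, ?_⟩, ⟨b, ?_, ?_⟩⟩
    · -- reduce δ a = v.1
      rw [reduce_eq_iff]
      refine ⟨by rw [halen, hm], fun i hi => ?_⟩
      rw [halen] at hi
      rw [← hca i hi, hcget i (by omega)]
      rw [hy', List.getD_append _ _ _ _ (by omega)]
    · rw [hzc, ← hab, List.append_assoc]
    · -- reduce δ b = w.1
      rw [reduce_eq_iff]
      refine ⟨by rw [hblen, hb'w], fun j hj => ?_⟩
      have hb'j : b'.getD j 0 = min (b.getD j 0) (δ (m + j)) := by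
        have h1 := hcget (m + j) (by omega)
        rw [hcb j hj, hy', List.getD_append_right _ _ _ _ (by omega), ← hm,
          show m + j - m = j by omega] at h1
        exact h1.symm
      rw [← reduce_comp hrb' j (by omega), hb'j,
        minClaim hvf p m j _ (hbz j hj)]


lemma key_assoc (hvf : ValleyFree δ) (u v w : Cliffs δ) :
    Bl δ K (Bl δ K (Finsupp.single u 1) (Finsupp.single v 1)) (Finsupp.single w 1) =
    Bl δ K (Finsupp.single u 1) (Bl δ K (Finsupp.single v 1) (Finsupp.single w 1)) := by
  classical
  rw [Bl_single_single, Bl_single_single]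
  ext z
  rw [coeff_left, coeff_right]
  exact if_congr (E_core hvf u v w z) rfl rfl

lemma assoc_all (hvf : ValleyFree δ) (f g h : Cliffs δ →₀ K) :
    Bl δ K (Bl δ K f g) h = Bl δ K f (Bl δ K g h) := by
  have hsm : ∀ (x : Cliffs δ) (b : K), (Finsupp.single x b : Cliffs δ →₀ K)
      = b • Finsupp.single x 1 := by
    intro x b
    rw [Finsupp.smul_single', mul_one]
  have k3 : ∀ (u v : Cliffs δ) (h : Cliffs δ →₀ K),
      Bl δ K (Bl δ K (Finsupp.single u 1) (Finsupp.single v 1)) h =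
      Bl δ K (Finsupp.single u 1) (Bl δ K (Finsupp.single v 1) h) := by
    intro u v
    have heq : Bl δ K (Bl δ K (Finsupp.single u 1) (Finsupp.single v 1)) =
        (Bl δ K (Finsupp.single u 1)).comp (Bl δ K (Finsupp.single v 1)) := by
      apply Finsupp.lhom_ext
      intro w b
      rw [hsm w b]
      simp only [map_smul, LinearMap.comp_apply]
      rw [key_assoc δ K hvf u v w]
    intro h
    exact LinearMap.congr_fun heq h
  have k2 : ∀ (u : Cliffs δ) (g h : Cliffs δ →₀ K),
      Bl δ K (Bl δ K (Finsupp.single u 1) g) h =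
      Bl δ K (Finsupp.single u 1) (Bl δ K g h) := by
    intro u g h
    have heq : ((Bl δ K).flip h).comp (Bl δ K (Finsupp.single u 1)) =
        (Bl δ K (Finsupp.single u 1)).comp ((Bl δ K).flip h) := by
      apply Finsupp.lhom_ext
      intro v b
      rw [hsm v b]
      simp only [map_smul, LinearMap.comp_apply, LinearMap.flip_apply]
      rw [k3 u v h]
    have := LinearMap.congr_fun heq g
    simpa using this
  have heq : ((Bl δ K).flip h).comp ((Bl δ K).flip g) =
      (Bl δ K).flip (Bl δ K g h) := by
    apply Finsupp.lhom_ext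
    intro u b
    rw [hsm u b]
    simp only [map_smul, LinearMap.comp_apply, LinearMap.flip_apply]
    rw [k2 u g h]
  have := LinearMap.congr_fun heq f
  simpa using this


lemma getD_replicate_zero (n k : ℕ) : (List.replicate n (0 : ℕ)).getD k 0 = 0 := by
  rcases Nat.lt_or_ge k n with h | h
  · rw [List.getD_eq_getElem _ 0 (by simpa using h), List.getElem_replicate]
  · rw [List.getD_eq_default _ 0 (by simpa using h)]

lemma getD_spike (j x k : ℕ) :
    (List.replicate j (0 : ℕ) ++ [x]).getD k 0 = if k = j then x else 0 := by
  rcases Nat.lt_trichotomy k j with h | h | h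
  · rw [List.getD_append _ _ _ _ (by simpa using h), getD_replicate_zero, if_neg (by omega)]
  · subst h
    rw [List.getD_append_right _ _ _ _ (by simp), if_pos rfl]
    simp
  · rw [List.getD_append_right _ _ _ _ (by simp; omega), if_neg (by omega)]
    rw [List.getD_eq_default]
    simp; omega

lemma not_assoc_of_not_vf [CharZero K] (hnvf : ¬ ValleyFree δ) :
    ¬ ∀ f g h : Cliffs δ →₀ K,
      mulCl δ K (mulCl δ K f g) h = mulCl δ K f (mulCl δ K g h) := by
  classical
  obtain ⟨i₁, i₂, i₃, h12, h23, hd1, hd3⟩ := not_not.1 hnvf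
  obtain ⟨m, hm, hm0⟩ : ∃ m, i₁ + m = i₂ ∧ 0 < m := ⟨i₂ - i₁, by omega, by omega⟩
  obtain ⟨p, hp, hp0⟩ : ∃ p, i₂ + p = i₃ ∧ 0 < p := ⟨i₃ - i₂, by omega, by omega⟩
  set Ul : List ℕ := List.replicate p 0 with hUl
  set Vl : List ℕ := List.replicate m 0 with hVl
  set Wl : List ℕ := List.replicate i₁ 0 ++ [δ i₂] with hWl
  set bl : List ℕ := List.replicate i₁ 0 ++ [min (δ i₁) (δ i₃)] with hbl
  set Zl : List ℕ := List.replicate (p + m) 0 ++ bl with hZl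
  have hWg : ∀ k, Wl.getD k 0 = if k = i₁ then δ i₂ else 0 := fun k => getD_spike _ _ _
  have hbg : ∀ k, bl.getD k 0 = if k = i₁ then min (δ i₁) (δ i₃) else 0 :=
    fun k => getD_spike _ _ _
  have hWlen : Wl.length = i₁ + 1 := by simp [hWl]
  have hblen : bl.length = i₁ + 1 := by simp [hbl]
  have hUc : IsCliff δ Ul := by
    intro i _; rw [hUl, getD_replicate_zero]; exact Nat.zero_le _
  have hVc : IsCliff δ Vl := by
    intro i _; rw [hVl, getD_replicate_zero]; exact Nat.zero_le _
  have hWc : IsCliff δ Wl := by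
    intro k _
    rw [hWg k]
    split_ifs with hk
    · subst hk; omega
    · exact Nat.zero_le _
  have hZc : IsCliff δ Zl := by
    intro k hk
    rw [hZl]
    rcases Nat.lt_or_ge k (p + m) with h | h
    · rw [List.getD_append _ _ _ _ (by simpa using h), getD_replicate_zero]
      exact Nat.zero_le _
    · rw [List.getD_append_right _ _ _ _ (by simpa using h), List.length_replicate, hbg]
      split_ifs with hk3
      · have : k = i₃ := by omega
        subst this
        exact le_trans (min_le_right _ _) le_rfl
      · exact Nat.zero_le _
  have hy'c : IsCliff δ (Vl ++ Wl) := by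
    intro k hk
    rcases Nat.lt_or_ge k m with h | h
    · rw [List.getD_append _ _ _ _ (by simp [hVl]; omega), hVl, getD_replicate_zero]
      exact Nat.zero_le _
    · rw [List.getD_append_right _ _ _ _ (by simp [hVl]; omega), hVl,
        List.length_replicate, hWg]
      split_ifs with hk2
      · have : k = i₂ := by omega
        subst this
        exact le_rfl
      · exact Nat.zero_le _
  have hred2 : reduce δ (Vl ++ bl) = Vl ++ Wl := by
    rw [reduce_eq_iff]
    constructor
    · simp [hVl, hWl, hbl]
    intro i hi
    rcases Nat.lt_or_ge i m with h | h
    · rw [List.getD_append _ _ _ _ (by simp [hVl]; omega),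
        List.getD_append _ _ _ _ (by simp [hVl]; omega), hVl, getD_replicate_zero]
      simp
    · have e1 : (Vl ++ bl).getD i 0 = bl.getD (i - m) 0 := by
        rw [List.getD_append_right _ _ _ _ (by simp [hVl]; omega), hVl,
          List.length_replicate]
      have e2 : (Vl ++ Wl).getD i 0 = Wl.getD (i - m) 0 := by
        rw [List.getD_append_right _ _ _ _ (by simp [hVl]; omega), hVl,
          List.length_replicate]
      rw [e1, e2, hbg, hWg]
      split_ifs with hcase
      · have : i = i₂ := by omega
        subst this
        omega
      · simp
  have hzeq : Zl = Ul ++ (Vl ++ bl) := by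
    rw [hZl, hUl, hVl, List.replicate_add, List.append_assoc]
  set U : Cliffs δ := ⟨Ul, hUc⟩
  set V : Cliffs δ := ⟨Vl, hVc⟩
  set W : Cliffs δ := ⟨Wl, hWc⟩
  set Z : Cliffs δ := ⟨Zl, hZc⟩
  have hA : ¬ ∃ y, Pl δ U V y ∧ Pl δ y W Z := by
    rintro ⟨y, hy1, ⟨s, hzs, hrs⟩⟩
    have hylen : y.1.length = p + m := by
      have := Pl_len hy1
      simpa [U, V, hUl, hVl] using this
    have hs : s = bl := by
      have h1 : Zl.drop (p + m) = s := by
        show Z.1.drop (p + m) = s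
        rw [hzs, ← hylen, List.drop_left]
      have h2 : Zl.drop (p + m) = bl := by
        rw [hZl]
        exact List.drop_left' List.length_replicate
      rw [← h1, h2]
    subst hs
    have hw : (W.1).getD i₁ 0 = δ i₂ := by
      show Wl.getD i₁ 0 = δ i₂
      rw [hWg]
      simp
    have hcomp := reduce_comp hrs i₁ (by omega)
    rw [hbg i₁, if_pos rfl, hw] at hcomp
    omega
  have hB : ∃ y, Pl δ V W y ∧ Pl δ U y Z := by
    refine ⟨⟨Vl ++ Wl, hy'c⟩, ⟨Wl, rfl, reduce_eq_self hWc⟩, ⟨Vl ++ bl, hzeq, hred2⟩⟩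
  intro hassoc
  have h := hassoc (Finsupp.single U 1) (Finsupp.single V 1) (Finsupp.single W 1)
  simp only [mulCl_eq] at h
  rw [Bl_single_single, Bl_single_single] at h
  have h2 := DFunLike.congr_fun h Z
  rw [coeff_left, coeff_right, if_neg hA, if_pos hB] at h2
  exact zero_ne_one h2

end St17

/-- `𝐂𝐥_δ` with the product extending `F_u · F_v = Σ F_{uv'}` is a
unital graded magmatic algebra (the product is bilinear, `F_ε` is a two-sided unit,
and the product of two basis elements of sizes `p` and `q` is supported in size
`p + q`), and the product is associative if and only if `δ` is valley-free. -/
theorem stmt17 (δ : ℕ → ℕ) (K : Type*) [Field K] [CharZero K] :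
    (∀ (a : K) (f₁ f₂ g : Cliffs δ →₀ K),
        mulCl δ K (a • f₁ + f₂) g = a • mulCl δ K f₁ g + mulCl δ K f₂ g) ∧
    (∀ (a : K) (f g₁ g₂ : Cliffs δ →₀ K),
        mulCl δ K f (a • g₁ + g₂) = a • mulCl δ K f g₁ + mulCl δ K f g₂) ∧
    (∀ f : Cliffs δ →₀ K, mulCl δ K (Finsupp.single (epsCliff δ) 1) f = f) ∧
    (∀ f : Cliffs δ →₀ K, mulCl δ K f (Finsupp.single (epsCliff δ) 1) = f) ∧
    (∀ u v : Cliffs δ, ∀ w ∈ (mulBasis δ K u v).support,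
        w.1.length = u.1.length + v.1.length) ∧
    ((∀ f g h : Cliffs δ →₀ K,
        mulCl δ K (mulCl δ K f g) h = mulCl δ K f (mulCl δ K g h)) ↔ ValleyFree δ) := by
  classical
  refine ⟨?_, ?_, ?_, ?_, ?_, ?_⟩
  · intro a f₁ f₂ g
    rw [St17.mulCl_eq, St17.mulCl_eq, St17.mulCl_eq, map_add, map_smul,
      LinearMap.add_apply, LinearMap.smul_apply]
  · intro a f g₁ g₂
    rw [St17.mulCl_eq, St17.mulCl_eq, St17.mulCl_eq, map_add, map_smul]
  · intro f
    rw [St17.mulCl_eq, St17.Bl_single_left]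
    simp only [St17.mulBasis_eps_left, Finsupp.smul_single', mul_one]
    exact Finsupp.sum_single f
  · intro f
    rw [St17.mulCl_eq, St17.Bl_single_right]
    simp only [St17.mulBasis_eps_right, Finsupp.smul_single', mul_one]
    exact Finsupp.sum_single f
  · intro u v w hw
    rw [Finsupp.mem_support_iff, St17.mulBasis_apply] at hw
    by_cases h : St17.Pl δ u v w
    · exact St17.Pl_len h
    · rw [if_neg h] at hw
      exact absurd rfl hw
  · constructor
    · intro hassoc
      by_contra hvf
      exact St17.not_assoc_of_not_vf δ K hvf hassoc
    · intro hvf f g h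
      simp only [St17.mulCl_eq]
      exact St17.assoc_all δ K hvf f g h
end

section
/- Let δ be a range map and let u and v be δ-cliffs. Then the set {uv' : v' ∈ ℕ^{|v|}, r_δ(v') = v, and uv' is a δ-cliff} is empty if the concatenation u▽v := uv is not a δ-cliff, and otherwise equals the interval {w ∈ Cl_δ(|u|+|v|) : u▽v ≼ w ≼ u△v}, where u△v := uv'' with v''_i = δ(|u|+i) if v_i = δ(i) and v''_i = v_i otherwise. (Equivalently, in the algebra 𝐂𝐥_δ on the F-basis, F_u · F_v = 𝟙_{u▽v ∈ Cl_δ} · Σ_{u▽v ≼ w ≼ u△v} F_w.) -/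
/-- The word `u △ v = u v''` where `v''_i = δ(|u| + i)` if `v_i = δ(i)` and
`v''_i = v_i` otherwise. -/
def underCl (δ : ℕ → ℕ) (u v : List ℕ) : List ℕ :=
  u ++ (List.range v.length).map fun i =>
    if v.getD i 0 = δ i then δ (u.length + i) else v.getD i 0

lemma wle_iff (u v : List ℕ) : wle u v ↔ u.length = v.length ∧ ∀ i < u.length, u.getD i 0 ≤ v.getD i 0 := by
  rw [wle, List.forall₂_iff_get]
  constructor
  · rintro ⟨h, h2⟩
    refine ⟨h, fun i hi => ?_⟩
    have := h2 i hi (h ▸ hi)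
    simpa [List.getD_eq_getElem, hi, h ▸ hi] using this
  · rintro ⟨h, h2⟩
    refine ⟨h, fun i hi hi2 => ?_⟩
    have := h2 i hi
    simpa [List.getD_eq_getElem, hi, hi2] using this

lemma mapRange_getD (f : ℕ → ℕ) (n i : ℕ) (h : i < n) : ((List.range n).map f).getD i 0 = f i := by
  rw [List.getD_eq_getElem] <;> simp [h]

lemma reduce_length (δ : ℕ → ℕ) (u : List ℕ) : (reduce δ u).length = u.length := by
  simp [reduce]

lemma reduce_getD (δ : ℕ → ℕ) (u : List ℕ) (i : ℕ) (h : i < u.length) :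
    (reduce δ u).getD i 0 = min (u.getD i 0) (δ i) :=
  mapRange_getD _ _ _ h

/-- For `δ`-cliffs `u`, `v`, the set
`{u v' : r_δ(v') = v and u v' ∈ Cl_δ}` (the support of `F_u · F_v`) is empty when
`u ▽ v = u v` is not a `δ`-cliff, and otherwise equals the interval
`[u ▽ v, u △ v]` of `Cl_δ(|u| + |v|)`. -/
theorem stmt18 (δ : ℕ → ℕ) (u v : List ℕ) (hu : IsCliff δ u) (hv : IsCliff δ v) :
    (¬ IsCliff δ (u ++ v) →
      {w | ∃ v' : List ℕ, w = u ++ v' ∧ reduce δ v' = v ∧ IsCliff δ w} = ∅) ∧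
    (IsCliff δ (u ++ v) →
      {w | ∃ v' : List ℕ, w = u ++ v' ∧ reduce δ v' = v ∧ IsCliff δ w}
        = {w | IsCliff δ w ∧ wle (u ++ v) w ∧ wle w (underCl δ u v)}) := by
  -- common fact: nonempty membership implies u ++ v is a cliff
  have key : ∀ w, (∃ v' : List ℕ, w = u ++ v' ∧ reduce δ v' = v ∧ IsCliff δ w) →
      IsCliff δ (u ++ v) := by
    rintro w ⟨v', rfl, hr, hc⟩
    have hlen : v.length = v'.length := by rw [← hr, reduce_length]
    intro i hi
    simp only [List.length_append] at hi
    rcases lt_or_ge i u.length with h | h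
    · rw [List.getD_append _ _ _ _ h]; exact hu i h
    · rw [List.getD_append_right _ _ _ _ h]
      have hiv : i - u.length < v.length := by omega
      have : v.getD (i - u.length) 0 = min (v'.getD (i - u.length) 0) (δ (i - u.length)) := by
        rw [← hr, reduce_getD]; omega
      have hc' := hc i (by simp only [List.length_append]; omega)
      rw [List.getD_append_right _ _ _ _ h] at hc'
      omega
  constructor
  · intro hnc
    ext w
    simp only [Set.mem_setOf_eq, Set.mem_empty_iff_false, iff_false]
    exact fun h => hnc (key w h)
  · intro hcl
    ext w
    simp only [Set.mem_setOf_eq]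
    constructor
    · rintro ⟨v', rfl, hr, hc⟩
      have hlen : v.length = v'.length := by rw [← hr, reduce_length]
      refine ⟨hc, ?_, ?_⟩
      · rw [wle_iff]
        refine ⟨by simp [hlen], fun i hi => ?_⟩
        simp only [List.length_append] at hi
        rcases lt_or_ge i u.length with h | h
        · rw [List.getD_append _ _ _ _ h, List.getD_append _ _ _ _ h]
        · rw [List.getD_append_right _ _ _ _ h, List.getD_append_right _ _ _ _ h]
          have : v.getD (i - u.length) 0 = min (v'.getD (i - u.length) 0) (δ (i - u.length)) := by
            rw [← hr, reduce_getD]; omega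
          omega
      · rw [wle_iff]
        refine ⟨by simp [underCl, hlen], fun i hi => ?_⟩
        simp only [List.length_append] at hi
        rcases lt_or_ge i u.length with h | h
        · rw [List.getD_append _ _ _ _ h, underCl, List.getD_append _ _ _ _ h]
        · rw [List.getD_append_right _ _ _ _ h, underCl, List.getD_append_right _ _ _ _ h,
            mapRange_getD _ _ _ (by omega)]
          have hvr : v.getD (i - u.length) 0 = min (v'.getD (i - u.length) 0) (δ (i - u.length)) := by
            rw [← hr, reduce_getD]; omega
          have hc' := hc i (by simp only [List.length_append]; omega)
          rw [List.getD_append_right _ _ _ _ h] at hc'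
          split_ifs with hcase
          · have : u.length + (i - u.length) = i := by omega
            rw [this]; exact hc'
          · omega
    · rintro ⟨hc, h1, h2⟩
      rw [wle_iff] at h1 h2
      obtain ⟨hl1, hg1⟩ := h1
      obtain ⟨hl2, hg2⟩ := h2
      simp only [List.length_append] at hl1
      have hlu : underCl δ u v = u ++ (List.range v.length).map fun i =>
          if v.getD i 0 = δ i then δ (u.length + i) else v.getD i 0 := rfl
      have hlw : w.length = u.length + v.length := by omega
      refine ⟨w.drop u.length, ?_, ?_, hc⟩
      · -- w = u ++ drop
        have htake : w.take u.length = u := by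
          apply List.ext_getElem
          · rw [List.length_take]; omega
          · intro i hi hi2
            have hiw : i < w.length := by omega
            have e1 : w[i] = w.getD i 0 := (List.getD_eq_getElem _ _ hiw).symm
            have e2 : (w.take u.length)[i] = w[i] := List.getElem_take ..
            have hle1 := hg1 i (by simp only [List.length_append]; omega)
            have hle2 := hg2 i hiw
            rw [List.getD_append _ _ _ _ hi2] at hle1
            rw [hlu, List.getD_append _ _ _ _ hi2] at hle2
            rw [e2, e1, List.getD_eq_getElem _ _ hi2] at *
            omega
        conv_lhs => rw [← List.take_append_drop u.length w, htake]
      · -- reduce δ (drop) = v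
        apply List.ext_getElem
        · rw [reduce_length, List.length_drop]; omega
        · intro i hi hi2
          have hiv : i < v.length := hi2
          have hid : i < (w.drop u.length).length := by rw [List.length_drop]; omega
          rw [← List.getD_eq_getElem (reduce δ (w.drop u.length)) 0 hi,
            ← List.getD_eq_getElem v 0 hi2, reduce_getD _ _ _ hid]
          have hdrop : (w.drop u.length).getD i 0 = w.getD (u.length + i) 0 := by
            rw [List.getD_eq_getElem _ _ (by rw [List.length_drop]; omega),
              List.getD_eq_getElem _ _ (by omega : u.length + i < w.length)]
            exact List.getElem_drop ..
          rw [hdrop]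
          have hle1 := hg1 (u.length + i) (by simp only [List.length_append]; omega)
          have hle2 := hg2 (u.length + i) (by omega)
          rw [List.getD_append_right _ _ _ _ (by omega), Nat.add_sub_cancel_left] at hle1
          rw [hlu, List.getD_append_right _ _ _ _ (by omega), Nat.add_sub_cancel_left,
            mapRange_getD _ _ _ hiv] at hle2
          split_ifs at hle2 with hcase
          · omega
          · have := hv i hiv
            omega
end
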